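/- Every n-dimensional null-filiform Leibniz algebra over the complex numbers is isomorphic to NF_n, the algebra with basis e_1,...,e_n and multiplication [e_i,e_1] = e_{i+1} for 1 ≤ i ≤ n-1. -/

import Mathlib

/-!
Choose `x` outside the codimension-one subspace `L²` and let `x¹ = x`, `xᵏ⁺¹ = [xᵏ, x]`.
The Leibniz identity gives `[Lᵏ, L²] ⊆ Lᵏ⁺²`, and from this one shows inductively that
`Lᵏ = ℂ xᵏ + Lᵏ⁺¹`. As `Lⁿ⁺¹ = 0`, the `n` vectors `x¹, …, xⁿ` span `L`, so they form a basis,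
and `xⁿ⁺¹ = 0`. The Leibniz identity also kills every bracket `[y, xᵏ]` with `k ≥ 2`, so the only
nonzero products of basis vectors are `[xᵏ, x] = xᵏ⁺¹`, which is the multiplication table of `NF_n`.
-/

/-- A (right) Leibniz algebra over a field `F`. -/
structure LeibnizAlgebra (F : Type*) [Field F] (L : Type*) [AddCommGroup L] [Module F L] where
  bracket : L →ₗ[F] L →ₗ[F] L
  leibniz : ∀ x y z : L,
    bracket x (bracket y z) = bracket (bracket x y) z - bracket (bracket x z) y

namespace LeibnizAlgebra

variable {F : Type*} [Field F] {L : Type*} [AddCommGroup L] [Module F L]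

/-- The subspace spanned by all brackets `[a,b]` with `a ∈ I`, `b ∈ J`. -/
def bracketSub (A : LeibnizAlgebra F L) (I J : Submodule F L) : Submodule F L :=
  Submodule.span F {z : L | ∃ a ∈ I, ∃ b ∈ J, z = A.bracket a b}

/-- A (two-sided) ideal of a Leibniz algebra. -/
def IsIdeal (A : LeibnizAlgebra F L) (I : Submodule F L) : Prop :=
  ∀ x a : L, a ∈ I → A.bracket x a ∈ I ∧ A.bracket a x ∈ I

/-- `lcsPow A I k` is `I^{k+1}`, where `I^1 = I` and `I^{k+1} = [I^k, I]`. -/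
def lcsPow (A : LeibnizAlgebra F L) (I : Submodule F L) : ℕ → Submodule F L
  | 0 => I
  | k + 1 => A.bracketSub (A.lcsPow I k) I

/-- `derPow A I s` is `I^{[s+1]}`, where `I^{[1]} = I` and `I^{[s+1]} = [I^{[s]}, I^{[s]}]`. -/
def derPow (A : LeibnizAlgebra F L) (I : Submodule F L) : ℕ → Submodule F L
  | 0 => I
  | s + 1 => A.bracketSub (A.derPow I s) (A.derPow I s)

end LeibnizAlgebra

/-- Coordinate of `u` at a natural-number index, zero out of range. -/
def cf {m : ℕ} (u : Fin m → ℂ) (j : ℕ) : ℂ := if h : j < m then u ⟨j, h⟩ else 0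

/-- The bracket of `NF_n`: `[e_i, e_1] = e_{i+1}` for `1 ≤ i ≤ n-1`, all other products of
basis vectors zero. -/
def nfBracket (n : ℕ) (u v : Fin n → ℂ) : Fin n → ℂ :=
  fun k => if 1 ≤ (k : ℕ) then cf u ((k : ℕ) - 1) * cf v 0 else 0

lemma Submodule.exists_span_singleton_sup_eq_top {F V : Type*} [Field F] [AddCommGroup V]
    [Module F V] [FiniteDimensional F V] (W : Submodule F V)
    (hW : Module.finrank F V ≤ Module.finrank F W + 1) : ∃ x : V, F ∙ x ⊔ W = ⊤ := by
  by_cases hW_top : W = ⊤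
  · exact ⟨0, by simp [hW_top]⟩
  obtain ⟨x, hx⟩ : ∃ x, x ∉ W := by
    by_contra! h
    exact hW_top (eq_top_iff.mpr fun x _ => h x)
  have hlt : W < F ∙ x ⊔ W := lt_of_le_of_ne le_sup_right fun h =>
    hx (h ▸ Submodule.mem_sup_left (Submodule.mem_span_singleton_self x))
  have := Submodule.finrank_lt_finrank_of_lt hlt
  exact ⟨x, Submodule.eq_top_of_finrank_eq (le_antisymm (Submodule.finrank_le _) (by omega))⟩

namespace LeibnizAlgebra

variable {F : Type*} [Field F] {L : Type*} [AddCommGroup L] [Module F L]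
  (A : LeibnizAlgebra F L)

lemma bracket_mem_bracketSub {I J : Submodule F L} {a b : L} (ha : a ∈ I) (hb : b ∈ J) :
    A.bracket a b ∈ A.bracketSub I J :=
  Submodule.subset_span ⟨a, ha, b, hb, rfl⟩

lemma bracket_mem_lcsPow_succ {I : Submodule F L} {k : ℕ} {a b : L} (ha : a ∈ A.lcsPow I k)
    (hb : b ∈ I) : A.bracket a b ∈ A.lcsPow I (k + 1) :=
  A.bracket_mem_bracketSub ha hb

lemma bracket_mem_lcsPow_add_two {k : ℕ} {a b : L} (ha : a ∈ A.lcsPow ⊤ k)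
    (hb : b ∈ A.lcsPow ⊤ 1) : A.bracket a b ∈ A.lcsPow ⊤ (k + 2) := by
  suffices A.lcsPow ⊤ 1 ≤ (A.lcsPow ⊤ (k + 2)).comap (A.bracket a) from this hb
  refine Submodule.span_le.mpr ?_
  rintro _ ⟨y, -, z, -, rfl⟩
  simp only [SetLike.mem_coe, Submodule.mem_comap, A.leibniz]
  exact sub_mem
    (A.bracket_mem_lcsPow_succ (A.bracket_mem_lcsPow_succ ha trivial) trivial)
    (A.bracket_mem_lcsPow_succ (A.bracket_mem_lcsPow_succ ha trivial) trivial)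

/-- `A.rightPow x k` is the right-normed power `[[x, x], …, x]` with `k + 1` factors. -/
def rightPow (x : L) (k : ℕ) : L :=
  (A.bracket.flip x ^ k) x

@[simp]
lemma rightPow_zero (x : L) : A.rightPow x 0 = x :=
  rfl

lemma rightPow_succ (x : L) (k : ℕ) : A.rightPow x (k + 1) = A.bracket (A.rightPow x k) x := by
  rw [rightPow, pow_succ', Module.End.mul_apply]
  rfl

lemma rightPow_mem_lcsPow (x : L) (k : ℕ) : A.rightPow x k ∈ A.lcsPow ⊤ k := by
  induction k with
  | zero => trivial
  | succ k ih => rw [rightPow_succ]; exact A.bracket_mem_lcsPow_succ ih trivial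

lemma bracket_rightPow_succ (y x : L) (k : ℕ) : A.bracket y (A.rightPow x (k + 1)) = 0 := by
  induction k generalizing y with
  | zero => rw [rightPow_succ, rightPow_zero, A.leibniz, sub_self]
  | succ k ih => rw [rightPow_succ, A.leibniz, ih, ih, map_zero, LinearMap.zero_apply, sub_zero]

lemma lcsPow_succ_le_span_sup {x y : L} {k : ℕ} (hx : ⊤ ≤ F ∙ x ⊔ A.lcsPow ⊤ 1)
    (hy : y ∈ A.lcsPow ⊤ k) (hk : A.lcsPow ⊤ k ≤ F ∙ y ⊔ A.lcsPow ⊤ (k + 1)) :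
    A.lcsPow ⊤ (k + 1) ≤ F ∙ A.bracket y x ⊔ A.lcsPow ⊤ (k + 2) := by
  set T := F ∙ A.bracket y x ⊔ A.lcsPow ⊤ (k + 2)
  have hyT : F ∙ x ⊔ A.lcsPow ⊤ 1 ≤ T.comap (A.bracket y) :=
    sup_le ((Submodule.span_singleton_le_iff_mem _ _).mpr
        (Submodule.mem_sup_left (Submodule.mem_span_singleton_self _)))
      fun z hz => Submodule.mem_sup_right (A.bracket_mem_lcsPow_add_two hy hz)
  refine Submodule.span_le.mpr ?_
  rintro _ ⟨a, ha, b, -, rfl⟩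
  have hbT : F ∙ y ⊔ A.lcsPow ⊤ (k + 1) ≤ T.comap (A.bracket.flip b) :=
    sup_le ((Submodule.span_singleton_le_iff_mem _ _).mpr (hyT (hx trivial)))
      fun z hz => Submodule.mem_sup_right (A.bracket_mem_lcsPow_succ hz trivial)
  exact hbT (hk ha)

lemma lcsPow_le_span_rightPow_sup {x : L} (hx : ⊤ ≤ F ∙ x ⊔ A.lcsPow ⊤ 1) (k : ℕ) :
    A.lcsPow ⊤ k ≤ F ∙ A.rightPow x k ⊔ A.lcsPow ⊤ (k + 1) := by
  induction k with
  | zero => exact hx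
  | succ k ih =>
    rw [rightPow_succ]
    exact A.lcsPow_succ_le_span_sup hx (A.rightPow_mem_lcsPow x k) ih

lemma top_le_span_rightPow_sup {x : L} (hx : ⊤ ≤ F ∙ x ⊔ A.lcsPow ⊤ 1) (k : ℕ) :
    ⊤ ≤ Submodule.span F (A.rightPow x '' Set.Iio k) ⊔ A.lcsPow ⊤ k := by
  induction k with
  | zero => exact le_sup_right
  | succ k ih =>
    calc ⊤ ≤ Submodule.span F (A.rightPow x '' Set.Iio k) ⊔ A.lcsPow ⊤ k := ih
      _ ≤ Submodule.span F (A.rightPow x '' Set.Iio k) ⊔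
            (F ∙ A.rightPow x k ⊔ A.lcsPow ⊤ (k + 1)) :=
        sup_le_sup_left (A.lcsPow_le_span_rightPow_sup hx k) _
      _ = Submodule.span F (A.rightPow x '' Set.Iio (k + 1)) ⊔ A.lcsPow ⊤ (k + 1) := by
        have hIio : Set.Iio (k + 1) = insert k (Set.Iio k) := by ext; simp
        rw [hIio, Set.image_insert_eq, Submodule.span_insert]
        ac_rfl

end LeibnizAlgebra

@[simp]
lemma cf_add {m : ℕ} (u v : Fin m → ℂ) (j : ℕ) : cf (u + v) j = cf u j + cf v j := by
  unfold cf; split <;> simp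

@[simp]
lemma cf_smul {m : ℕ} (c : ℂ) (u : Fin m → ℂ) (j : ℕ) : cf (c • u) j = c * cf u j := by
  unfold cf; split <;> simp

noncomputable def nfBracketₗ (n : ℕ) : (Fin n → ℂ) →ₗ[ℂ] (Fin n → ℂ) →ₗ[ℂ] (Fin n → ℂ) :=
  LinearMap.mk₂ ℂ (nfBracket n)
    (fun _ _ _ => by
      ext; simp only [nfBracket, Pi.add_apply, cf_add]; split_ifs <;> ring)
    (fun _ _ _ => by
      ext; simp only [nfBracket, Pi.smul_apply, cf_smul, smul_eq_mul]; split_ifs <;> ring)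
    (fun _ _ _ => by
      ext; simp only [nfBracket, Pi.add_apply, cf_add]; split_ifs <;> ring)
    (fun _ _ _ => by
      ext; simp only [nfBracket, Pi.smul_apply, cf_smul, smul_eq_mul]; split_ifs <;> ring)

lemma nfBracket_single {n : ℕ} (i j k : Fin n) :
    nfBracket n (Pi.single i 1) (Pi.single j 1) k =
      if (j : ℕ) = 0 ∧ (k : ℕ) = i + 1 then 1 else 0 := by
  by_cases hk : 1 ≤ (k : ℕ)
  · have hk' : (k : ℕ) - 1 < n := by omega
    simp only [nfBracket, cf, hk, hk', k.pos, Pi.single_apply, Fin.ext_iff, dif_pos, if_true]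
    split_ifs <;> simp <;> omega
  · simp [nfBracket, hk]; omega

namespace LeibnizAlgebra

variable {L : Type*} [AddCommGroup L] [Module ℂ L] (A : LeibnizAlgebra ℂ L)

theorem exists_linearEquiv_nfBracket_of_rightPow {n : ℕ} (hdim : Module.finrank ℂ L = n)
    {x : L} (hspan : ⊤ ≤ Submodule.span ℂ (A.rightPow x '' Set.Iio n)) (hx : A.rightPow x n = 0) :
    ∃ e : L ≃ₗ[ℂ] (Fin n → ℂ), ∀ a b : L, e (A.bracket a b) = nfBracket n (e a) (e b) := by
  have hrange : Set.range (fun i : Fin n => A.rightPow x i) = A.rightPow x '' Set.Iio n := by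
    rw [Set.range_comp' (A.rightPow x) Fin.val, Fin.range_val]
  let B := basisOfTopLeSpanOfCardEqFinrank _ (hrange ▸ hspan) (by simp [hdim])
  have hB : ∀ i, B i = A.rightPow x i := by simp [B]
  have hsingle : ∀ i, B.equivFun (B i) = Pi.single i 1 := fun i => by
    ext; simp [B.equivFun_self, Pi.single_apply, eq_comm]
  have hcoord : ∀ m ≤ n,
      B.equivFun (A.rightPow x m) = fun k : Fin n => if (k : ℕ) = m then 1 else 0 := by
    intro m hm
    rcases hm.lt_or_eq with hm | rfl
    · ext k
      simp only [← hB ⟨m, hm⟩, B.equivFun_self, Fin.ext_iff, eq_comm]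
    · ext k
      simp [hx, k.isLt.ne]
  have hbasis : ∀ i j : Fin n, B.equivFun (A.bracket (B i) (B j))
      = nfBracket n (B.equivFun (B i)) (B.equivFun (B j)) := by
    intro i j
    ext k
    rw [hsingle, hsingle, nfBracket_single, hB, hB]
    obtain ⟨_ | j, hj⟩ := j
    · rw [rightPow_zero, ← rightPow_succ, hcoord _ i.isLt]
      simp
    · rw [A.bracket_rightPow_succ, map_zero]
      simp
  refine ⟨B.equivFun, fun a b => ?_⟩
  have := LinearMap.ext_basis B B (B := A.bracket.compr₂ B.equivFun.toLinearMap)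
    (B' := (nfBracketₗ n).compl₁₂ B.equivFun.toLinearMap B.equivFun.toLinearMap) hbasis
  exact LinearMap.congr_fun₂ this a b

end LeibnizAlgebra

open LeibnizAlgebra in
/-- Every `n`-dimensional null-filiform complex Leibniz algebra is isomorphic to `NF_n`. -/
theorem nullFiliform_iso_NF
    {L : Type*} [AddCommGroup L] [Module ℂ L] [FiniteDimensional ℂ L]
    (A : LeibnizAlgebra ℂ L) (n : ℕ) (hdim : Module.finrank ℂ L = n)
    (hnf : ∀ i : ℕ, 1 ≤ i → i ≤ n + 1 →
      Module.finrank ℂ ↥(A.lcsPow ⊤ (i - 1)) = n + 1 - i) :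
    ∃ e : L ≃ₗ[ℂ] (Fin n → ℂ), ∀ a b : L,
      e (A.bracket a b) = nfBracket n (e a) (e b) := by
  have hcodim : Module.finrank ℂ L ≤ Module.finrank ℂ (A.lcsPow ⊤ 1) + 1 := by
    rcases n with _ | n
    · omega
    · have := hnf 2 (by omega) (by omega)
      simp only [Nat.add_one_sub_one] at this
      omega
  obtain ⟨x, hx⟩ := (A.lcsPow ⊤ 1).exists_span_singleton_sup_eq_top hcodim
  have hbot : A.lcsPow ⊤ n = ⊥ := by
    simpa using hnf (n + 1) (by omega) le_rfl
  have hspan := A.top_le_span_rightPow_sup hx.ge n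
  rw [hbot, sup_bot_eq] at hspan
  have hxn : A.rightPow x n = 0 := by
    simpa [hbot] using A.rightPow_mem_lcsPow x n
  exact A.exists_linearEquiv_nfBracket_of_rightPow hdim hspan hxn
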